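/- Let D be the trapezoid with vertices (0,0), (1,0), (0,1), (1,2), and set a = 11/18 - √3893/458, b = 1/2 + 11√3893/4122, c = 1 - 10√3893/2061, d = 11/18 + √3893/458, λ = 163/392. Then L(f) = λ·(3/2)·f(5/9,7/9) + (1-λ)·(3/8)·(f(a,0)+f(1,c)+f(0,b)+f(d,d+1)) equals ∫∫_D f dA for every polynomial f(x,y) of total degree ≤ 2. -/

import Mathlib

open MeasureTheory MvPolynomial Real

/-- The trapezoid with vertices (0,0), (1,0), (0,1), (1,2). -/
def Trap : Set (Fin 2 → ℝ) := {v | 0 ≤ v 0 ∧ v 0 ≤ 1 ∧ 0 ≤ v 1 ∧ v 1 ≤ v 0 + 1}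

/-!
Both sides are linear in `p`, so it suffices to check the six monomials `x ^ i * y ^ j` with
`i + j ≤ 2`. Integrating first in `y`, the moments of the trapezoid are
`∫₀¹ x ^ i (x + 1) ^ (j + 1) / (j + 1) dx`, a finite sum of binomial coefficients, and the rule
reproduces each of them once `√3893 ^ 2` is replaced by `3893`.
-/

open Set

theorem setIntegral_prod_Icc_fiber {α E : Type*} [MeasurableSpace α] [NormedAddCommGroup E]
    [NormedSpace ℝ E] {μ : Measure α} [SFinite μ] {s : Set α} {g h : α → ℝ}
    (hs : MeasurableSet s) (hg : Measurable g) (hh : Measurable h) {f : α × ℝ → E}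
    (hf : IntegrableOn f {q | q.1 ∈ s ∧ q.2 ∈ Icc (g q.1) (h q.1)} (μ.prod volume)) :
    ∫ q in {q | q.1 ∈ s ∧ q.2 ∈ Icc (g q.1) (h q.1)}, f q ∂(μ.prod volume)
      = ∫ x in s, (∫ y in Icc (g x) (h x), f (x, y)) ∂μ := by
  have hm : MeasurableSet {q : α × ℝ | q.1 ∈ s ∧ q.2 ∈ Icc (g q.1) (h q.1)} :=
    (measurable_fst hs).inter
      ((measurableSet_le (hg.comp measurable_fst) measurable_snd).inter
        (measurableSet_le measurable_snd (hh.comp measurable_fst)))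
  rw [← integral_indicator hm, integral_prod _ (hf.integrable_indicator hm),
    ← integral_indicator hs]
  congr 1 with x
  by_cases hx : x ∈ s
  · rw [indicator_of_mem hx, ← integral_indicator measurableSet_Icc]
    congr 1 with y
    simp [Set.indicator, hx]
  · simp [hx]

theorem trap_subset_Icc : Trap ⊆ Icc 0 2 := by
  rintro v ⟨h0, h1, h2, h3⟩
  constructor <;> intro i <;> fin_cases i <;> simp <;> linarith

theorem Continuous.integrableOn_trap {f : (Fin 2 → ℝ) → ℝ} (hf : Continuous f) :
    IntegrableOn f Trap :=
  (hf.integrableOn_Icc (a := 0) (b := 2)).mono_set trap_subset_Icc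

theorem setIntegral_trap (g : ℝ → ℝ → ℝ) (hg : Continuous fun q : ℝ × ℝ => g q.1 q.2) :
    ∫ v in Trap, g (v 0) (v 1) = ∫ x in (0:ℝ)..1, ∫ y in (0:ℝ)..(x + 1), g x y := by
  let R : Set (ℝ × ℝ) := {q | q.1 ∈ Icc 0 1 ∧ q.2 ∈ Icc 0 (q.1 + 1)}
  have hTrap : Trap = MeasurableEquiv.finTwoArrow ⁻¹' R := by
    ext v
    simp [Trap, R, and_assoc]
  have hR : IntegrableOn (fun q : ℝ × ℝ => g q.1 q.2) R (volume.prod volume) := by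
    refine (hg.integrableOn_Icc (a := (0, 0)) (b := (1, 2))).mono_set ?_
    rintro q ⟨⟨h0, h1⟩, h2, h3⟩
    exact ⟨⟨h0, h2⟩, h1, by linarith⟩
  change ∫ v in _, (fun q : ℝ × ℝ => g q.1 q.2) (MeasurableEquiv.finTwoArrow v) = _
  rw [hTrap, (volume_preserving_finTwoArrow ℝ).setIntegral_preimage_emb
      (MeasurableEquiv.measurableEmbedding _) (fun q => g q.1 q.2), Measure.volume_eq_prod,
    setIntegral_prod_Icc_fiber (g := fun _ => 0) (h := fun x => x + 1) measurableSet_Icc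
      measurable_const (by fun_prop) hR,
    intervalIntegral.integral_of_le zero_le_one, ← integral_Icc_eq_integral_Ioc]
  refine setIntegral_congr_fun measurableSet_Icc fun x hx => ?_
  rw [intervalIntegral.integral_of_le (by linarith [hx.1]), ← integral_Icc_eq_integral_Ioc]

theorem integral_unitInterval_pow_mul_add_one_pow (i n : ℕ) :
    ∫ x in (0:ℝ)..1, x ^ i * (x + 1) ^ n
      = ∑ k ∈ Finset.range (n + 1), (n.choose k : ℝ) / (i + k + 1) := by
  have hexpand (x : ℝ) :
      x ^ i * (x + 1) ^ n = ∑ k ∈ Finset.range (n + 1), (n.choose k : ℝ) * x ^ (i + k) := by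
    rw [add_pow, Finset.mul_sum]
    exact Finset.sum_congr rfl fun k _ => by ring
  simp_rw [hexpand]
  rw [intervalIntegral.integral_finsetSum fun k _ =>
    Continuous.intervalIntegrable (by fun_prop) _ _]
  refine Finset.sum_congr rfl fun k _ => ?_
  rw [intervalIntegral.integral_const_mul, integral_pow]
  push_cast
  ring

theorem setIntegral_trap_monomial (i j : ℕ) :
    ∫ v in Trap, v 0 ^ i * v 1 ^ j
      = (∑ k ∈ Finset.range (j + 2), ((j + 1).choose k : ℝ) / (i + k + 1)) / (j + 1) := by
  rw [setIntegral_trap (fun x y => x ^ i * y ^ j) (by fun_prop)]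
  simp [integral_pow, mul_div_assoc', integral_unitInterval_pow_mul_add_one_pow]

noncomputable def trapRule (f : (Fin 2 → ℝ) → ℝ) : ℝ :=
  let a : ℝ := 11/18 - Real.sqrt 3893 / 458
  let b : ℝ := 1/2 + 11 * Real.sqrt 3893 / 4122
  let c : ℝ := 1 - 10 * Real.sqrt 3893 / 2061
  let d : ℝ := 11/18 + Real.sqrt 3893 / 458
  let l : ℝ := 163/392
  l * (3/2) * f ![5/9, 7/9] + (1 - l) * (3/8) * (f ![a, 0] + f ![1, c] + f ![0, b] + f ![d, d + 1])

theorem trapRule_sum_mul {ι : Type*} (s : Finset ι) (c : ι → ℝ) (f : ι → (Fin 2 → ℝ) → ℝ) :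
    trapRule (fun v => ∑ i ∈ s, c i * f i v) = ∑ i ∈ s, c i * trapRule (f i) := by
  simp only [trapRule, Finset.mul_sum, ← Finset.sum_add_distrib]
  exact Finset.sum_congr rfl fun i _ => by ring

theorem trapRule_monomial {i j : ℕ} (hij : i + j ≤ 2) :
    trapRule (fun v => v 0 ^ i * v 1 ^ j) = ∫ v in Trap, v 0 ^ i * v 1 ^ j := by
  have hs : √3893 ^ 2 = 3893 := Real.sq_sqrt (by norm_num)
  rw [setIntegral_trap_monomial]
  obtain ⟨rfl, rfl⟩ | ⟨rfl, rfl⟩ | ⟨rfl, rfl⟩ | ⟨rfl, rfl⟩ | ⟨rfl, rfl⟩ | ⟨rfl, rfl⟩ :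
      (i = 0 ∧ j = 0) ∨ (i = 1 ∧ j = 0) ∨ (i = 0 ∧ j = 1) ∨
        (i = 2 ∧ j = 0) ∨ (i = 1 ∧ j = 1) ∨ (i = 0 ∧ j = 2) := by omega
  all_goals
    simp only [trapRule, Matrix.cons_val_zero, Matrix.cons_val_one, Matrix.cons_val_fin_one,
      Finset.sum_range_succ, Finset.sum_range_zero, Nat.choose_zero_right, Nat.choose_one_right,
      Nat.choose_self, Nat.choose_succ_self_right]
    push_cast
    ring_nf <;> rw [hs] <;> norm_num

theorem add_le_totalDegree_of_mem_support {R : Type*} [CommSemiring R]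
    {p : MvPolynomial (Fin 2) R} {m : Fin 2 →₀ ℕ} (hm : m ∈ p.support) :
    m 0 + m 1 ≤ p.totalDegree := by
  have h : m.degree ≤ p.totalDegree := le_totalDegree hm
  rwa [Finsupp.degree_eq_sum, Fin.sum_univ_two] at h

theorem stmt_17 (p : MvPolynomial (Fin 2) ℝ) (hp : p.totalDegree ≤ 2) :
    let a : ℝ := 11/18 - Real.sqrt 3893 / 458
    let b : ℝ := 1/2 + 11 * Real.sqrt 3893 / 4122
    let c : ℝ := 1 - 10 * Real.sqrt 3893 / 2061
    let d : ℝ := 11/18 + Real.sqrt 3893 / 458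
    let l : ℝ := 163/392
    l * (3/2) * eval ![5/9, 7/9] p
        + (1 - l) * (3/8) *
          (eval ![a, 0] p + eval ![1, c] p + eval ![0, b] p + eval ![d, d + 1] p)
      = ∫ v in Trap, eval v p := by
  show trapRule (fun v => eval v p) = ∫ v in Trap, eval v p
  simp only [eval_eq', Fin.prod_univ_two]
  rw [trapRule_sum_mul,
    integral_finsetSum _ fun m _ => (Continuous.integrableOn_trap (by fun_prop))]
  refine Finset.sum_congr rfl fun m hm => ?_
  rw [integral_const_mul, trapRule_monomial ((add_le_totalDegree_of_mem_support hm).trans hp)]
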